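/- For a symmetric positive definite matrix S with eigenvalues λ_S = λ₁ < λ₂ ≤ … ≤ λ_N, unit eigenvector u_S for λ_S, P_S = I − u_S u_Sᵀ, M₀ = Γ_S(S⁻¹ − k_S I)Γ_S S⁻¹ where Γ_S = P_S(P_S S⁻¹ P_S − k_N I)⁺ P_S, k_S = 1/λ_S, k_{S,i} = 1/λ_i, and k_S ≥ k_N > k_{S,2} > 0: the eigenvalues of M₀ are 0 (on u_S) and (k_{S,i} − k_S)k_{S,i}/(k_{S,i} − k_N)² on u_{S,i} for i ≥ 2, and ‖M₀‖ = k_{S,2}(k_S − k_{S,2})/(k_N − k_{S,2})². -/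

import Mathlib

open Matrix

/-!
Γ_S kills u_S and acts as `1 / (μ - k_N)` on every other eigenvector of `S⁻¹`, since those are
orthogonal to u_S. Hence `M₀` is diagonal in an orthonormal eigenbasis of `S⁻¹`, with entry `0` on
u_S and `(μ - k_S) μ / (μ - k_N)²` on the others, and its operator norm is the largest modulus of
these entries. As `t ↦ t (k_S - t) / (k_N - t)²` increases on `[0, k_N)`, the maximum over the
eigenvalues `0 < μ ≤ k_{S,2}` is attained at `k_{S,2}`.
-/

noncomputable def opNorm {n : ℕ} (A : Matrix (Fin n) (Fin n) ℝ) : ℝ :=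
  ‖(Matrix.toEuclideanCLM (𝕜 := ℝ) A : EuclideanSpace ℝ (Fin n) →L[ℝ] EuclideanSpace ℝ (Fin n))‖

section Matrix

variable {ι R K : Type*} [Fintype ι] [CommRing R] [Field K]

theorem one_sub_vecMulVec_mulVec_self [DecidableEq ι] {u : ι → R} (hu : u ⬝ᵥ u = 1) :
    (1 - vecMulVec u u) *ᵥ u = 0 := by
  simp [sub_mulVec, vecMulVec_mulVec, hu]

theorem one_sub_vecMulVec_mulVec_of_dotProduct_eq_zero [DecidableEq ι] {u v : ι → R}
    (hv : u ⬝ᵥ v = 0) :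
    (1 - vecMulVec u u) *ᵥ v = v := by
  simp [sub_mulVec, vecMulVec_mulVec, hv]

theorem dotProduct_eq_zero_of_mulVec_eq_smul [NoZeroDivisors R] {A : Matrix ι ι R}
    (hA : A.IsSymm) {u v : ι → R} {a b : R} (hu : A *ᵥ u = a • u) (hv : A *ᵥ v = b • v)
    (hab : a ≠ b) : u ⬝ᵥ v = 0 := by
  have h : a * (u ⬝ᵥ v) = b * (u ⬝ᵥ v) :=
    calc a * (u ⬝ᵥ v) = (A *ᵥ u) ⬝ᵥ v := by rw [hu, smul_dotProduct, smul_eq_mul]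
      _ = u ⬝ᵥ (A *ᵥ v) := by rw [dotProduct_comm, ← dotProduct_transpose_mulVec, hA.eq]
      _ = b * (u ⬝ᵥ v) := by rw [hv, dotProduct_smul, smul_eq_mul]
  exact (mul_eq_mul_right_iff.1 h).resolve_left hab

theorem mul_sub_smul_one_mul_mul_mulVec [DecidableEq ι] {Γ A : Matrix ι ι R} {v : ι → R}
    {γ μ k : R}
    (hΓ : Γ *ᵥ v = γ • v) (hA : A *ᵥ v = μ • v) :
    (Γ * (A - k • 1) * Γ * A) *ᵥ v = (γ * (μ - k) * γ * μ) • v := by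
  simp only [← mulVec_mulVec, hA, hΓ, mulVec_smul, sub_mulVec, mulVec_sub, smul_mulVec,
    one_mulVec]
  module

theorem one_sub_vecMulVec_mul_mul_mulVec [DecidableEq ι] {A G : Matrix ι ι K} {u v : ι → K}
    {μ k : K}
    (hG : ∀ w, u ⬝ᵥ w = 0 →
      G *ᵥ (((1 - vecMulVec u u) * A * (1 - vecMulVec u u) - k • 1) *ᵥ w) = w)
    (hv : u ⬝ᵥ v = 0) (hAv : A *ᵥ v = μ • v) (hμ : μ ≠ k) :
    ((1 - vecMulVec u u) * G * (1 - vecMulVec u u)) *ᵥ v = (μ - k)⁻¹ • v := by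
  have hPv := one_sub_vecMulVec_mulVec_of_dotProduct_eq_zero hv
  have hGv : G *ᵥ ((μ - k) • v) = v := by
    simpa only [sub_mulVec, ← mulVec_mulVec, hPv, hAv, mulVec_smul, smul_mulVec, one_mulVec,
      sub_smul] using hG v hv
  rw [mulVec_smul, ← eq_inv_smul_iff₀ (sub_ne_zero.2 hμ)] at hGv
  rw [← mulVec_mulVec, ← mulVec_mulVec, hPv, hGv, mulVec_smul, hPv]

end Matrix

theorem ContinuousLinearMap.norm_le_opNorm_of_apply_eq_smul {𝕜 E : Type*}
    [NontriviallyNormedField 𝕜] [NormedAddCommGroup E] [NormedSpace 𝕜 E] (T : E →L[𝕜] E)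
    {x : E} {c : 𝕜} (hx : x ≠ 0) (hTx : T x = c • x) : ‖c‖ ≤ ‖T‖ := by
  have := T.le_opNorm x
  rw [hTx, norm_smul] at this
  exact le_of_mul_le_mul_right this (norm_pos_iff.2 hx)

theorem OrthonormalBasis.opNorm_le_of_apply_eq_smul {𝕜 E ι : Type*} [RCLike 𝕜]
    [NormedAddCommGroup E] [InnerProductSpace 𝕜 E] [Fintype ι] (b : OrthonormalBasis ι 𝕜 E)
    (T : E →L[𝕜] E) (c : ι → 𝕜) (hT : ∀ i, T (b i) = c i • b i) {C : ℝ} (hC : 0 ≤ C)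
    (hc : ∀ i, ‖c i‖ ≤ C) : ‖T‖ ≤ C := by
  classical
  refine T.opNorm_le_bound hC fun x => ?_
  have hrepr : ∀ i, b.repr (T x) i = c i * b.repr x i := by
    intro i
    conv_lhs => rw [← b.sum_repr x]
    simp [hT, smul_smul, b.repr_self, Pi.single_apply, mul_comm]
  rw [← b.repr.norm_map, ← b.repr.norm_map x, EuclideanSpace.norm_eq, EuclideanSpace.norm_eq,
    ← Real.sqrt_sq hC, ← Real.sqrt_mul (sq_nonneg C), Finset.mul_sum]
  gcongr with i
  rw [hrepr, norm_mul, mul_pow]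
  gcongr
  exact hc i

theorem monotoneOn_mul_sub_div_sub_sq {a b : ℝ} (hba : b ≤ a) :
    MonotoneOn (fun t => t * (a - t) / (b - t) ^ 2) (Set.Ico 0 b) := by
  rintro s ⟨hs, hsb⟩ t ⟨ht, htb⟩ hst
  rw [div_le_div_iff₀ (by nlinarith) (by nlinarith), ← sub_nonneg]
  have key : t * (a - t) * (b - s) ^ 2 - s * (a - s) * (b - t) ^ 2 =
      (t - s) * (b * (b - s) * (b - t) + (a - b) * (b ^ 2 - s * t)) := by ring
  rw [key]
  refine mul_nonneg (sub_nonneg.2 hst) (add_nonneg ?_ ?_)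
  · exact mul_nonneg (mul_nonneg (by linarith) (by linarith)) (by linarith)
  · exact mul_nonneg (sub_nonneg.2 hba) (by nlinarith)

theorem abs_sub_mul_div_sub_sq_eq {a b t : ℝ} (ht : 0 ≤ t) (hta : t ≤ a) :
    |(t - a) * t / (t - b) ^ 2| = t * (a - t) / (b - t) ^ 2 := by
  rw [abs_of_nonpos (div_nonpos_of_nonpos_of_nonneg (by nlinarith) (sq_nonneg _))]
  ring

theorem abs_sub_mul_div_sub_sq_le {a b c t : ℝ} (hba : b ≤ a) (hcb : c < b) (hc : 0 ≤ c)
    (ht : t = a ∨ 0 ≤ t ∧ t ≤ c) : |(t - a) * t / (t - b) ^ 2| ≤ c * (a - c) / (b - c) ^ 2 := by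
  rcases ht with rfl | ⟨ht, htc⟩
  · simpa using div_nonneg (mul_nonneg hc (by linarith : 0 ≤ t - c)) (sq_nonneg (b - c))
  · rw [abs_sub_mul_div_sub_sq_eq ht (by linarith)]
    exact monotoneOn_mul_sub_div_sub_sq hba ⟨ht, by linarith⟩ ⟨hc, hcb⟩ htc

theorem mulVec_eq_smul_of_forall_dotProduct_eq_zero {ι : Type*} [Fintype ι]
    {A M : Matrix ι ι ℝ} (hA : A.IsSymm) {u : EuclideanSpace ℝ ι} {a : ℝ}
    (hu : A *ᵥ u = a • u) (hsimple : ∀ v : EuclideanSpace ℝ ι, A *ᵥ v = a • v → ∃ c : ℝ, v = c • u)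
    (hMu : M *ᵥ u = 0) {f : ℝ → ℝ} (hfa : f a = 0)
    (hperp : ∀ (μ : ℝ) (v : EuclideanSpace ℝ ι), v ≠ 0 → u ⬝ᵥ v = 0 → A *ᵥ v = μ • v →
      M *ᵥ v = f μ • v)
    (μ : ℝ) (v : EuclideanSpace ℝ ι) (hv0 : v ≠ 0) (hv : A *ᵥ v = μ • v) : M *ᵥ v = f μ • v := by
  rcases eq_or_ne μ a with rfl | hμ
  · obtain ⟨c, rfl⟩ := hsimple v hv
    simp [mulVec_smul, hMu, hfa]
  · exact hperp μ v hv0 (dotProduct_eq_zero_of_mulVec_eq_smul hA hu hv hμ.symm) hv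

theorem opNorm_eq_of_mulVec_eq_smul {n : ℕ} {A M : Matrix (Fin n) (Fin n) ℝ}
    (hA : A.IsHermitian) (f : ℝ → ℝ)
    (hM : ∀ (μ : ℝ) (v : EuclideanSpace ℝ (Fin n)), v ≠ 0 → A *ᵥ v = μ • v → M *ᵥ v = f μ • v)
    {C : ℝ} (hC : ∀ (μ : ℝ) (v : EuclideanSpace ℝ (Fin n)), v ≠ 0 → A *ᵥ v = μ • v → |f μ| ≤ C)
    {μ₀ : ℝ} {v₀ : EuclideanSpace ℝ (Fin n)} (hv₀ : v₀ ≠ 0) (hAv₀ : A *ᵥ v₀ = μ₀ • v₀)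
    (hCμ₀ : |f μ₀| = C) : opNorm M = C := by
  set T := (toEuclideanCLM (𝕜 := ℝ) M : EuclideanSpace ℝ (Fin n) →L[ℝ] EuclideanSpace ℝ (Fin n))
  have hT : ∀ μ (v : EuclideanSpace ℝ (Fin n)), v ≠ 0 → A *ᵥ v = μ • v → T v = f μ • v :=
    fun μ v hv h => WithLp.ofLp_injective 2 (hM μ v hv h)
  have hb := hA.eigenvectorBasis.orthonormal.ne_zero
  apply le_antisymm
  · exact hA.eigenvectorBasis.opNorm_le_of_apply_eq_smul T _
      (fun i => hT _ _ (hb i) (hA.mulVec_eigenvectorBasis i)) (hCμ₀ ▸ abs_nonneg _)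
      fun i => hC _ _ (hb i) (hA.mulVec_eigenvectorBasis i)
  · rw [← hCμ₀]
    exact T.norm_le_opNorm_of_apply_eq_smul hv₀ (hT μ₀ v₀ hv₀ hAv₀)

theorem stmt19_general (n : ℕ) (S G : Matrix (Fin n) (Fin n) ℝ) (hS : S.PosDef)
    (kS kS2 kN : ℝ) (uS : EuclideanSpace ℝ (Fin n)) (huS : ‖uS‖ = 1)
    (heig : S⁻¹ *ᵥ uS = kS • uS)
    (hsimple : ∀ v : EuclideanSpace ℝ (Fin n), S⁻¹ *ᵥ v = kS • v → ∃ c : ℝ, v = c • uS)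
    (hk2 : ∃ u2 : EuclideanSpace ℝ (Fin n), ‖u2‖ = 1 ∧ uS ⬝ᵥ u2 = 0 ∧ S⁻¹ *ᵥ u2 = kS2 • u2)
    (hmax : ∀ (μ : ℝ) (v : EuclideanSpace ℝ (Fin n)), v ≠ 0 → S⁻¹ *ᵥ v = μ • v →
      μ = kS ∨ μ ≤ kS2)
    (hpos : ∀ (μ : ℝ) (v : EuclideanSpace ℝ (Fin n)), v ≠ 0 → S⁻¹ *ᵥ v = μ • v → 0 < μ)
    (hgap1 : kS ≥ kN) (hgap2 : kN > kS2) (hgap3 : kS2 > 0)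
    (PS GamS M0 : Matrix (Fin n) (Fin n) ℝ)
    (hPS : PS = 1 - vecMulVec uS uS)
    (hG1 : ∀ v : Fin n → ℝ, uS ⬝ᵥ v = 0 → G *ᵥ ((PS * S⁻¹ * PS - kN • 1) *ᵥ v) = v)
    (hGam : GamS = PS * G * PS)
    (hM0 : M0 = GamS * (S⁻¹ - kS • 1) * GamS * S⁻¹) :
    M0 *ᵥ uS = 0 ∧
    (∀ (μ : ℝ) (v : EuclideanSpace ℝ (Fin n)), v ≠ 0 → uS ⬝ᵥ v = 0 → S⁻¹ *ᵥ v = μ • v →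
      M0 *ᵥ v = ((μ - kS) * μ / (μ - kN) ^ 2) • v) ∧
    opNorm M0 = kS2 * (kS - kS2) / (kN - kS2) ^ 2 := by
  have hu : (uS : Fin n → ℝ) ⬝ᵥ uS = 1 := by
    have := real_inner_self_eq_norm_sq uS
    rwa [EuclideanSpace.inner_eq_star_dotProduct, star_trivial, huS, one_pow] at this
  have hΓu : GamS *ᵥ uS = (0 : ℝ) • uS := by
    rw [hGam, hPS, ← mulVec_mulVec, ← mulVec_mulVec, one_sub_vecMulVec_mulVec_self hu]
    simp
  have hker : M0 *ᵥ uS = 0 := by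
    rw [hM0, mul_sub_smul_one_mul_mul_mulVec hΓu heig]
    simp
  have hperp : ∀ (μ : ℝ) (v : EuclideanSpace ℝ (Fin n)), v ≠ 0 → uS ⬝ᵥ v = 0 →
      S⁻¹ *ᵥ v = μ • v → M0 *ᵥ v = ((μ - kS) * μ / (μ - kN) ^ 2) • v := by
    intro μ v hv0 hvu hv
    have hμS : μ ≠ kS := by
      rintro rfl
      obtain ⟨c, rfl⟩ := hsimple v hv
      rw [WithLp.ofLp_smul, dotProduct_smul, hu, smul_eq_mul, mul_one] at hvu
      exact hv0 (by rw [hvu, zero_smul])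
    have hμN : μ ≠ kN := (((hmax μ v hv0 hv).resolve_left hμS).trans_lt hgap2).ne
    subst hPS
    rw [hM0, hGam, mul_sub_smul_one_mul_mul_mulVec
      (one_sub_vecMulVec_mul_mul_mulVec hG1 hvu hv hμN) hv]
    congr 1
    field_simp
  obtain ⟨u2, hu2norm, -, hu2⟩ := hk2
  have hSinv := hS.isHermitian.inv
  have heigen := mulVec_eq_smul_of_forall_dotProduct_eq_zero (isHermitian_iff_isSymm.1 hSinv)
    heig hsimple hker (by simp) hperp
  refine ⟨hker, hperp, opNorm_eq_of_mulVec_eq_smul hSinv _ heigen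
    (fun μ v hv0 hv => abs_sub_mul_div_sub_sq_le hgap1 hgap2 hgap3.le ?_)
    (v₀ := u2) (by rintro rfl; simp at hu2norm) hu2 ?_⟩
  · exact (hmax μ v hv0 hv).imp_right fun h => ⟨(hpos μ v hv0 hv).le, h⟩
  · exact abs_sub_mul_div_sub_sq_eq hgap3.le (by linarith)

/-- with M₀ = Γ_S(S⁻¹ − k_S I)Γ_S S⁻¹, Γ_S = P_S(P_S S⁻¹ P_S − k_N I)⁺P_S,
the eigenvalues of M₀ are 0 on u_S and (k_{S,i} − k_S)k_{S,i}/(k_{S,i} − k_N)² on the other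
eigenvectors of S⁻¹, and ‖M₀‖ = k_{S,2}(k_S − k_{S,2})/(k_N − k_{S,2})². -/
theorem stmt19 (n : ℕ) (S G : Matrix (Fin n) (Fin n) ℝ) (hS : S.PosDef)
    (kS kS2 kN : ℝ) (uS : EuclideanSpace ℝ (Fin n)) (huS : ‖uS‖ = 1)
    (heig : S⁻¹ *ᵥ uS = kS • uS)
    (hsimple : ∀ v : EuclideanSpace ℝ (Fin n), S⁻¹ *ᵥ v = kS • v → ∃ c : ℝ, v = c • uS)
    (hk2 : ∃ u2 : EuclideanSpace ℝ (Fin n), ‖u2‖ = 1 ∧ uS ⬝ᵥ u2 = 0 ∧ S⁻¹ *ᵥ u2 = kS2 • u2)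
    (hmax : ∀ (μ : ℝ) (v : EuclideanSpace ℝ (Fin n)), v ≠ 0 → S⁻¹ *ᵥ v = μ • v →
      μ = kS ∨ μ ≤ kS2)
    (hpos : ∀ (μ : ℝ) (v : EuclideanSpace ℝ (Fin n)), v ≠ 0 → S⁻¹ *ᵥ v = μ • v → 0 < μ)
    (hgap1 : kS ≥ kN) (hgap2 : kN > kS2) (hgap3 : kS2 > 0)
    (PS GamS M0 : Matrix (Fin n) (Fin n) ℝ)
    (hPS : PS = 1 - vecMulVec uS uS)
    (hG1 : ∀ v : Fin n → ℝ, uS ⬝ᵥ v = 0 → G *ᵥ ((PS * S⁻¹ * PS - kN • 1) *ᵥ v) = v)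
    (hG2 : ∀ v : Fin n → ℝ, uS ⬝ᵥ v = 0 → uS ⬝ᵥ (G *ᵥ v) = 0)
    (hG3 : ∀ c : ℝ, G *ᵥ (c • uS) = 0)
    (hGam : GamS = PS * G * PS)
    (hM0 : M0 = GamS * (S⁻¹ - kS • 1) * GamS * S⁻¹) :
    M0 *ᵥ uS = 0 ∧
    (∀ (μ : ℝ) (v : EuclideanSpace ℝ (Fin n)), v ≠ 0 → uS ⬝ᵥ v = 0 → S⁻¹ *ᵥ v = μ • v →
      M0 *ᵥ v = ((μ - kS) * μ / (μ - kN) ^ 2) • v) ∧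
    opNorm M0 = kS2 * (kS - kS2) / (kN - kS2) ^ 2 :=
  stmt19_general n S G hS kS kS2 kN uS huS heig hsimple hk2 hmax hpos hgap1 hgap2 hgap3 PS GamS M0
    hPS hG1 hGam hM0
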